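/- The ℂ-linear extension of the adjunction map t preserves the Hodge decomposition: t(H^{2,0}) ⊆ H^{2,0}, t(H^{1,1}) ⊆ H^{1,1}, and t(H^{0,2}) ⊆ H^{0,2} (i.e., t is a morphism of Hodge structures). -/
import Mathlib


open scoped TensorProduct

noncomputable section

/-- Complex conjugation on `ℂ` as a `ℚ`-algebra homomorphism. -/
def conjQAlg : ℂ →ₐ[ℚ] ℂ := (Complex.conjAe.restrictScalars ℚ).toAlgHom

variable (H : Type) [Ring H] [Algebra ℚ H] [FiniteDimensional ℚ H]

/-- The conjugate-linear involution of `H_ℂ = ℂ ⊗[ℚ] H` fixing `H`. -/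
def sigmaC : ℂ ⊗[ℚ] H →ₗ[ℚ] ℂ ⊗[ℚ] H :=
  (Algebra.TensorProduct.map conjQAlg (AlgHom.id ℚ H)).toLinearMap

/-- The inclusion of `H` into `H_ℂ = ℂ ⊗[ℚ] H`. -/
def inclH : H →ₐ[ℚ] ℂ ⊗[ℚ] H := Algebra.TensorProduct.includeRight

/-- The data of a polarized weight 2 Hodge structure on a finite-dimensional `ℚ`-algebra `H`,
compatible with the ring structure:
(i) a Hodge decomposition `H_ℂ = H^{2,0} ⊕ H^{1,1} ⊕ H^{0,2}` with `σ(H^{2,0}) = H^{0,2}`,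
`σ(H^{1,1}) = H^{1,1}`;
(ii) a polarization: a symmetric `ℚ`-bilinear form `B` on `H` with `ℂ`-bilinear extension `BC`
to `H_ℂ`, whose associated Hermitian pairing `h(α,β) := BC α (σ β)` makes the Hodge pieces
pairwise orthogonal and is positive definite on `H^{2,0}`, `H^{0,2}` and negative definite on
`H^{1,1}`;
(iii) the product is a morphism of Hodge structures of bidegree `(-1,-1)`:
`H^{p,q}·H^{p',q'} ⊆ H^{p+p'-1,q+q'-1}`;
(iv) an adjunction `t`: a `ℚ`-linear involution with `t(ab) = t(b)t(a)`,
`⟨ab,c⟩ = ⟨b, t(a)c⟩` and `⟨ab,c⟩ = ⟨a, c·t(b)⟩`. -/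
structure HodgeAlgebraData where
  H20 : Submodule ℂ (ℂ ⊗[ℚ] H)
  H11 : Submodule ℂ (ℂ ⊗[ℚ] H)
  H02 : Submodule ℂ (ℂ ⊗[ℚ] H)
  sup_top : H20 ⊔ H11 ⊔ H02 = ⊤
  disj1 : H20 ⊓ (H11 ⊔ H02) = ⊥
  disj2 : H11 ⊓ H02 = ⊥
  sigma_20 : ∀ x ∈ H20, sigmaC H x ∈ H02
  sigma_02 : ∀ x ∈ H02, sigmaC H x ∈ H20
  sigma_11 : ∀ x ∈ H11, sigmaC H x ∈ H11
  B : H →ₗ[ℚ] H →ₗ[ℚ] ℚ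
  B_symm : ∀ a b : H, B a b = B b a
  BC : (ℂ ⊗[ℚ] H) →ₗ[ℂ] (ℂ ⊗[ℚ] H) →ₗ[ℂ] ℂ
  BC_extends : ∀ a b : H, BC (inclH H a) (inclH H b) = (B a b : ℂ)
  BC_symm : ∀ x y, BC x y = BC y x
  BC_conj : ∀ x y, BC (sigmaC H x) (sigmaC H y) = starRingEnd ℂ (BC x y)
  orth_20_11 : ∀ x ∈ H20, ∀ y ∈ H11, BC x (sigmaC H y) = 0
  orth_20_02 : ∀ x ∈ H20, ∀ y ∈ H02, BC x (sigmaC H y) = 0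
  orth_11_02 : ∀ x ∈ H11, ∀ y ∈ H02, BC x (sigmaC H y) = 0
  pos_20 : ∀ x ∈ H20, x ≠ 0 → 0 < (BC x (sigmaC H x)).re ∧ (BC x (sigmaC H x)).im = 0
  pos_02 : ∀ x ∈ H02, x ≠ 0 → 0 < (BC x (sigmaC H x)).re ∧ (BC x (sigmaC H x)).im = 0
  neg_11 : ∀ x ∈ H11, x ≠ 0 → (BC x (sigmaC H x)).re < 0 ∧ (BC x (sigmaC H x)).im = 0
  mul_20_20 : ∀ x ∈ H20, ∀ y ∈ H20, x * y = 0
  mul_20_11 : ∀ x ∈ H20, ∀ y ∈ H11, x * y ∈ H20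
  mul_11_20 : ∀ x ∈ H11, ∀ y ∈ H20, x * y ∈ H20
  mul_11_11 : ∀ x ∈ H11, ∀ y ∈ H11, x * y ∈ H11
  mul_20_02 : ∀ x ∈ H20, ∀ y ∈ H02, x * y ∈ H11
  mul_02_20 : ∀ x ∈ H02, ∀ y ∈ H20, x * y ∈ H11
  mul_02_02 : ∀ x ∈ H02, ∀ y ∈ H02, x * y = 0
  mul_11_02 : ∀ x ∈ H11, ∀ y ∈ H02, x * y ∈ H02
  mul_02_11 : ∀ x ∈ H02, ∀ y ∈ H11, x * y ∈ H02
  t : H →ₗ[ℚ] H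
  t_invol : ∀ a : H, t (t a) = a
  t_mul : ∀ a b : H, t (a * b) = t b * t a
  adj_left : ∀ a b c : H, B (a * b) c = B b (t a * c)
  adj_right : ∀ a b c : H, B (a * b) c = B a (c * t b)

variable {H}

/-- `W := H^{2,0}·H_ℂ`, the `ℂ`-linear span of all products `x·y` with `x ∈ H^{2,0}`,
`y ∈ H_ℂ`. -/
def HodgeAlgebraData.W (D : HodgeAlgebraData H) : Submodule ℂ (ℂ ⊗[ℚ] H) := D.H20 * ⊤

/-- `σ(W)`, the image of `W` under the conjugation `σ`, as a `ℚ`-subspace of `H_ℂ`. -/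
def HodgeAlgebraData.sigmaW (D : HodgeAlgebraData H) : Submodule ℚ (ℂ ⊗[ℚ] H) :=
  (D.W.restrictScalars ℚ).map (sigmaC H)

/-- The `ℂ`-linear extension of `t` to `H_ℂ`. -/
def HodgeAlgebraData.tC (D : HodgeAlgebraData H) : ℂ ⊗[ℚ] H →ₗ[ℂ] ℂ ⊗[ℚ] H :=
  LinearMap.baseChange ℂ D.t

section Aux

variable (D : HodgeAlgebraData H)

lemma sigmaC_invol (x : ℂ ⊗[ℚ] H) : sigmaC H (sigmaC H x) = x := by
  induction x using TensorProduct.induction_on with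
  | zero => simp
  | tmul r a =>
      simp [sigmaC, Algebra.TensorProduct.map_tmul, conjQAlg]
  | add x y hx hy => simp [map_add, hx, hy]

lemma sigmaC_one : sigmaC H (1 : ℂ ⊗[ℚ] H) = 1 :=
  map_one (Algebra.TensorProduct.map conjQAlg (AlgHom.id ℚ H))

lemma hodge_decomp (v : ℂ ⊗[ℚ] H) :
    ∃ a ∈ D.H20, ∃ b ∈ D.H11, ∃ c ∈ D.H02, v = a + b + c := by
  have hv : v ∈ D.H20 ⊔ D.H11 ⊔ D.H02 := by rw [D.sup_top]; trivial
  rw [Submodule.mem_sup] at hv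
  obtain ⟨u, hu, c, hc, rfl⟩ := hv
  rw [Submodule.mem_sup] at hu
  obtain ⟨a, ha, b, hb, rfl⟩ := hu
  exact ⟨a, ha, b, hb, c, hc, rfl⟩

lemma hodge_decomp_zero {a b c : ℂ ⊗[ℚ] H} (ha : a ∈ D.H20) (hb : b ∈ D.H11)
    (hc : c ∈ D.H02) (h : a + b + c = 0) : a = 0 ∧ b = 0 ∧ c = 0 := by
  have ha0 : a = 0 := by
    have hmem : a ∈ D.H20 ⊓ (D.H11 ⊔ D.H02) := by
      refine ⟨ha, ?_⟩
      have : a = -(b + c) := by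
        have := h; rw [add_assoc] at this; exact eq_neg_of_add_eq_zero_left this
      rw [this]
      exact neg_mem (Submodule.add_mem_sup hb hc)
    rw [D.disj1] at hmem
    simpa using hmem
  have hb0 : b = 0 := by
    have hmem : b ∈ D.H11 ⊓ D.H02 := by
      refine ⟨hb, ?_⟩
      have : b = -c := by
        rw [ha0, zero_add] at h; exact eq_neg_of_add_eq_zero_left h
      rw [this]
      exact neg_mem hc
    rw [D.disj2] at hmem
    simpa using hmem
  refine ⟨ha0, hb0, ?_⟩
  rw [ha0, hb0] at h; simpa using h

lemma one_mem_H11 : (1 : ℂ ⊗[ℚ] H) ∈ D.H11 := by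
  obtain ⟨e, he, f, hf, g, hg, h1⟩ := hodge_decomp D 1
  -- from 1 * e = e : f*e = e, g*e = 0
  have he1 : (f * e - e) + (g * e) + 0 = 0 := by
    have h2 : e = f * e + g * e := by
      have : e = e * e + f * e + g * e := by
        calc e = 1 * e := (one_mul e).symm
          _ = e * e + f * e + g * e := by rw [h1, add_mul, add_mul]
      rwa [D.mul_20_20 e he e he, zero_add] at this
    have h3 : (f * e - e) + (g * e) + 0 = (f * e + g * e) - e := by abel
    rw [h3, ← h2, sub_self]
  obtain ⟨hfe, hge, -⟩ := hodge_decomp_zero D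
    (sub_mem (D.mul_11_20 f hf e he) he) (D.mul_02_20 g hg e he) (zero_mem _) he1
  -- from 1 * g = g : e*g = 0, f*g = g
  have hg1 : (0 : ℂ ⊗[ℚ] H) + (e * g) + (f * g - g) = 0 := by
    have h2 : g = e * g + f * g := by
      have : g = e * g + f * g + g * g := by
        calc g = 1 * g := (one_mul g).symm
          _ = e * g + f * g + g * g := by rw [h1, add_mul, add_mul]
      rwa [D.mul_02_02 g hg g hg, add_zero] at this
    have h3 : (0 : ℂ ⊗[ℚ] H) + (e * g) + (f * g - g) = (e * g + f * g) - g := by abel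
    rw [h3, ← h2, sub_self]
  obtain ⟨-, heg, hfg⟩ := hodge_decomp_zero D (zero_mem _)
    (D.mul_20_02 e he g hg) (sub_mem (D.mul_11_02 f hf g hg) hg) hg1
  -- from f * 1 = f : e = 0, g = 0
  have hfe' : f * e = e := by rwa [sub_eq_zero] at hfe
  have hfg' : f * g = g := by rwa [sub_eq_zero] at hfg
  have hf1 : e + (f * f - f) + g = 0 := by
    have h2 : f = e + f * f + g := by
      have : f = f * e + f * f + f * g := by
        calc f = f * 1 := (mul_one f).symm
          _ = f * e + f * f + f * g := by rw [h1, mul_add, mul_add]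
      rwa [hfe', hfg'] at this
    have h3 : e + (f * f - f) + g = (e + f * f + g) - f := by abel
    rw [h3, ← h2, sub_self]
  obtain ⟨he0, -, hg0⟩ := hodge_decomp_zero D he
    (sub_mem (D.mul_11_11 f hf f hf) hf) hg hf1
  rw [h1, he0, hg0]
  simpa using hf

lemma BC_one_H20 {w : ℂ ⊗[ℚ] H} (hw : w ∈ D.H20) : D.BC 1 w = 0 := by
  have : D.BC 1 (sigmaC H (sigmaC H w)) = 0 :=
    D.orth_11_02 1 (one_mem_H11 D) (sigmaC H w) (D.sigma_20 w hw)
  rwa [sigmaC_invol] at this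

lemma BC_one_H02 {w : ℂ ⊗[ℚ] H} (hw : w ∈ D.H02) : D.BC 1 w = 0 := by
  have h0 : D.BC (sigmaC H w) (sigmaC H 1) = 0 :=
    D.orth_20_11 (sigmaC H w) (D.sigma_02 w hw) 1 (one_mem_H11 D)
  rw [sigmaC_one] at h0
  have := D.BC_conj (sigmaC H w) 1
  rw [sigmaC_invol, sigmaC_one, h0, map_zero] at this
  rw [D.BC_symm]
  exact this

lemma BC_orth_11_20 {b a : ℂ ⊗[ℚ] H} (hb : b ∈ D.H11) (ha : a ∈ D.H20) :
    D.BC b (sigmaC H a) = 0 := by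
  have h0 : D.BC a (sigmaC H b) = 0 := D.orth_20_11 a ha b hb
  have := D.BC_conj a (sigmaC H b)
  rw [sigmaC_invol, h0, map_zero] at this
  rw [D.BC_symm]
  exact this

lemma BC_orth_02_20 {c a : ℂ ⊗[ℚ] H} (hc : c ∈ D.H02) (ha : a ∈ D.H20) :
    D.BC c (sigmaC H a) = 0 := by
  have h0 : D.BC a (sigmaC H c) = 0 := D.orth_20_02 a ha c hc
  have := D.BC_conj a (sigmaC H c)
  rw [sigmaC_invol, h0, map_zero] at this
  rw [D.BC_symm]
  exact this

lemma BC_orth_02_11 {c b : ℂ ⊗[ℚ] H} (hc : c ∈ D.H02) (hb : b ∈ D.H11) :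
    D.BC c (sigmaC H b) = 0 := by
  have h0 : D.BC b (sigmaC H c) = 0 := D.orth_11_02 b hb c hc
  have := D.BC_conj b (sigmaC H c)
  rw [sigmaC_invol, h0, map_zero] at this
  rw [D.BC_symm]
  exact this

/-- The key adjunction identity, extended to `H_ℂ`. -/
lemma BC_tC_adj (x z : ℂ ⊗[ℚ] H) : D.BC (D.tC x) z = D.BC 1 (x * z) := by
  induction x using TensorProduct.induction_on with
  | zero => simp
  | add x y hx hy => simp [map_add, add_mul, hx, hy]
  | tmul r a =>
    induction z using TensorProduct.induction_on with
    | zero => simp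
    | add z w hz hw => simp [map_add, mul_add, hz, hw]
    | tmul s c =>
      have hQ : D.B (D.t a) c = D.B 1 (a * c) := by
        have := D.adj_left (D.t a) 1 c
        rw [mul_one, D.t_invol] at this
        exact this
      have e1 : D.tC (r ⊗ₜ[ℚ] a) = r ⊗ₜ[ℚ] (D.t a) := by
        simp [HodgeAlgebraData.tC]
      have sm : ∀ (u : ℂ) (m : H), (u ⊗ₜ[ℚ] m : ℂ ⊗[ℚ] H) = u • inclH H m := by
        intro u m
        simp [inclH, Algebra.TensorProduct.includeRight_apply, TensorProduct.smul_tmul',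
          smul_eq_mul, mul_one]
      rw [e1, Algebra.TensorProduct.tmul_mul_tmul, sm r (D.t a), sm s c,
        sm (r * s) (a * c)]
      simp only [map_smul, LinearMap.smul_apply, smul_eq_mul]
      rw [D.BC_extends, show (1 : ℂ ⊗[ℚ] H) = inclH H 1 from (map_one (inclH H)).symm,
        D.BC_extends, hQ]
      ring

lemma H11_self_zero {b : ℂ ⊗[ℚ] H} (hb : b ∈ D.H11)
    (h : D.BC b (sigmaC H b) = 0) : b = 0 := by
  by_contra hne
  have := (D.neg_11 b hb hne).1
  rw [h] at this
  simp at this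

lemma H20_self_zero {a : ℂ ⊗[ℚ] H} (ha : a ∈ D.H20)
    (h : D.BC a (sigmaC H a) = 0) : a = 0 := by
  by_contra hne
  have := (D.pos_20 a ha hne).1
  rw [h] at this
  simp at this

lemma H02_self_zero {c : ℂ ⊗[ℚ] H} (hc : c ∈ D.H02)
    (h : D.BC c (sigmaC H c) = 0) : c = 0 := by
  by_contra hne
  have := (D.pos_02 c hc hne).1
  rw [h] at this
  simp at this

end Aux

/-- The `ℂ`-linear extension of the adjunction map `t` preserves the Hodge
decomposition: `t(H^{2,0}) ⊆ H^{2,0}`, `t(H^{1,1}) ⊆ H^{1,1}` and `t(H^{0,2}) ⊆ H^{0,2}`,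
i.e. `t` is a morphism of Hodge structures. -/
theorem t_preserves_hodge_decomposition (D : HodgeAlgebraData H) :
    (∀ x ∈ D.H20, D.tC x ∈ D.H20) ∧ (∀ x ∈ D.H11, D.tC x ∈ D.H11) ∧
      (∀ x ∈ D.H02, D.tC x ∈ D.H02) := by
  refine ⟨?_, ?_, ?_⟩
  · -- H20 case
    intro x hx
    obtain ⟨a, ha, b, hb, c, hc, hd⟩ := hodge_decomp D (D.tC x)
    have hb0 : b = 0 := by
      apply H11_self_zero D hb
      have key : D.BC (D.tC x) (sigmaC H b) = 0 := by
        rw [BC_tC_adj]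
        exact BC_one_H20 D (D.mul_20_11 x hx _ (D.sigma_11 b hb))
      rw [hd] at key
      simp only [map_add, LinearMap.add_apply] at key
      rw [D.orth_20_11 a ha b hb, BC_orth_02_11 D hc hb] at key
      linear_combination key
    have hc0 : c = 0 := by
      apply H02_self_zero D hc
      have key : D.BC (D.tC x) (sigmaC H c) = 0 := by
        rw [BC_tC_adj, D.mul_20_20 x hx _ (D.sigma_02 c hc), map_zero]
      rw [hd] at key
      simp only [map_add, LinearMap.add_apply] at key
      rw [D.orth_20_02 a ha c hc, D.orth_11_02 b hb c hc] at key
      linear_combination key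
    rw [hd, hb0, hc0]
    simpa using ha
  · -- H11 case
    intro x hx
    obtain ⟨a, ha, b, hb, c, hc, hd⟩ := hodge_decomp D (D.tC x)
    have ha0 : a = 0 := by
      apply H20_self_zero D ha
      have key : D.BC (D.tC x) (sigmaC H a) = 0 := by
        rw [BC_tC_adj]
        exact BC_one_H02 D (D.mul_11_02 x hx _ (D.sigma_20 a ha))
      rw [hd] at key
      simp only [map_add, LinearMap.add_apply] at key
      rw [BC_orth_11_20 D hb ha, BC_orth_02_20 D hc ha] at key
      linear_combination key
    have hc0 : c = 0 := by
      apply H02_self_zero D hc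
      have key : D.BC (D.tC x) (sigmaC H c) = 0 := by
        rw [BC_tC_adj]
        exact BC_one_H20 D (D.mul_11_20 x hx _ (D.sigma_02 c hc))
      rw [hd] at key
      simp only [map_add, LinearMap.add_apply] at key
      rw [D.orth_20_02 a ha c hc, D.orth_11_02 b hb c hc] at key
      linear_combination key
    rw [hd, ha0, hc0]
    simpa using hb
  · -- H02 case
    intro x hx
    obtain ⟨a, ha, b, hb, c, hc, hd⟩ := hodge_decomp D (D.tC x)
    have ha0 : a = 0 := by
      apply H20_self_zero D ha
      have key : D.BC (D.tC x) (sigmaC H a) = 0 := by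
        rw [BC_tC_adj, D.mul_02_02 x hx _ (D.sigma_20 a ha), map_zero]
      rw [hd] at key
      simp only [map_add, LinearMap.add_apply] at key
      rw [BC_orth_11_20 D hb ha, BC_orth_02_20 D hc ha] at key
      linear_combination key
    have hb0 : b = 0 := by
      apply H11_self_zero D hb
      have key : D.BC (D.tC x) (sigmaC H b) = 0 := by
        rw [BC_tC_adj]
        exact BC_one_H02 D (D.mul_02_11 x hx _ (D.sigma_11 b hb))
      rw [hd] at key
      simp only [map_add, LinearMap.add_apply] at key
      rw [D.orth_20_11 a ha b hb, BC_orth_02_11 D hc hb] at key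
      linear_combination key
    rw [hd, ha0, hb0]
    simpa using hc
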